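/- In any swap equilibrium of a 2-type Swap Schelling Game played on a 4-neighbor grid in which both colors have at least two agents, every agent has strictly positive utility. -/

import Mathlib

open SimpleGraph Finset
open scoped Classical

noncomputable def ssgUtil {V A : Type*} [Fintype V] [DecidableEq V]
    (G : SimpleGraph V) [DecidableRel G.Adj]
    {k : ℕ} (c : A → Fin k) (σ : A ≃ V) (i : A) : ℚ :=
  (((G.neighborFinset (σ i)).filter (fun v => c (σ.symm v) = c i)).card : ℚ) /
    (G.degree (σ i) : ℚ)

def ssgSwap {V A : Type*} [DecidableEq V] (σ : A ≃ V) (i j : A) : A ≃ V :=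
  σ.trans (Equiv.swap (σ i) (σ j))

def ssgProfitable {V A : Type*} [Fintype V] [DecidableEq V]
    (G : SimpleGraph V) [DecidableRel G.Adj]
    {k : ℕ} (c : A → Fin k) (σ : A ≃ V) (i j : A) : Prop :=
  c i ≠ c j ∧
    ssgUtil G c σ i < ssgUtil G c (ssgSwap σ i j) i ∧
    ssgUtil G c σ j < ssgUtil G c (ssgSwap σ i j) j

def ssgEquilibrium {V A : Type*} [Fintype V] [DecidableEq V]
    (G : SimpleGraph V) [DecidableRel G.Adj]
    {k : ℕ} (c : A → Fin k) (σ : A ≃ V) : Prop :=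
  ∀ i j : A, ¬ ssgProfitable G c σ i j

def ssgLocalEquilibrium {V A : Type*} [Fintype V] [DecidableEq V]
    (G : SimpleGraph V) [DecidableRel G.Adj]
    {k : ℕ} (c : A → Fin k) (σ : A ≃ V) : Prop :=
  ∀ i j : A, G.Adj (σ i) (σ j) → ¬ ssgProfitable G c σ i j

noncomputable def ssgWelfare {V A : Type*} [Fintype V] [DecidableEq V] [Fintype A]
    (G : SimpleGraph V) [DecidableRel G.Adj]
    {k : ℕ} (c : A → Fin k) (σ : A ≃ V) : ℚ :=
  ∑ i : A, ssgUtil G c σ i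

noncomputable def ssgPhi {V A : Type*} [Fintype V] [DecidableEq V]
    (G : SimpleGraph V) [DecidableRel G.Adj]
    {k : ℕ} (c : A → Fin k) (σ : A ≃ V) : ℕ :=
  (G.edgeFinset.filter (fun e => ∀ u ∈ e, ∀ v ∈ e, c (σ.symm u) = c (σ.symm v))).card


def grid4 (l h : ℕ) : SimpleGraph (Fin l × Fin h) where
  Adj p q := Nat.dist p.1.val q.1.val + Nat.dist p.2.val q.2.val = 1
  symm := by
    constructor
    intro p q hpq
    beta_reduce at hpq ⊢
    rwa [Nat.dist_comm p.1.val, Nat.dist_comm p.2.val] at hpq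
  loopless := by constructor; intro p hp; simp [Nat.dist_self] at hp

instance (l h : ℕ) : DecidableRel (grid4 l h).Adj :=
  fun p q => inferInstanceAs (Decidable
    (Nat.dist p.1.val q.1.val + Nat.dist p.2.val q.2.val = 1))

/-!
Suppose agent `i` has no neighbour of its own colour in a swap equilibrium. Then every agent `j`
of the other colour has at most one neighbour of `i`'s colour: otherwise `i` and `j` would both
gain by swapping. If `j` is not adjacent to `i`, `j` would move to a spot surrounded by its own
colour; if it is and `i`'s colour occupies `t ≥ 2` neighbours of `j`, then `j` trades utility
`1 - t / deg j` for `1 - 1 / deg i`, a gain because adjacent grid vertices have degree ratio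
below `2`. Hence the agents of `i`'s colour other than `i` form a set closed under
adjacency, so by connectivity of the grid they occupy everything, contradicting the presence of
the other colour.
-/

namespace SimpleGraph

lemma Preconnected.forall_of_adj_closed {V : Type*} {G : SimpleGraph V}
    (hG : G.Preconnected) {p : V → Prop} (hp : ∀ u w, G.Adj u w → p u → p w) {u : V} (hu : p u)
    (w : V) : p w := by
  obtain ⟨W⟩ := hG u w
  induction W with
  | nil => exact hu
  | cons huv _ ih => exact ih (hp _ _ huv hu)

lemma pathGraph_degree_le_two {n : ℕ} (v : Fin n) : (pathGraph n).degree v ≤ 2 := by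
  match n, v with
  | 1, v => simp
  | n + 2, v =>
    calc (pathGraph (n + 2)).degree v ≤ (cycleGraph (n + 2)).degree v :=
          degree_le_of_le pathGraph_le_cycleGraph
      _ ≤ 2 := by rw [cycleGraph_degree_two_le]; exact card_le_two

lemma pathGraph_degree_pos {n : ℕ} (hn : 2 ≤ n) (v : Fin n) : 0 < (pathGraph n).degree v :=
  have : Nontrivial (Fin n) := Fin.nontrivial_iff_two_le.mpr hn
  (pathGraph_preconnected n).degree_pos_of_nontrivial v

end SimpleGraph

section Swap

variable {V A : Type*} [DecidableEq V] (σ : A ≃ V)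

lemma ssgSwap_comm (i j : A) : ssgSwap σ i j = ssgSwap σ j i := by
  rw [ssgSwap, ssgSwap, Equiv.swap_comm]

lemma ssgSwap_apply_left (i j : A) : ssgSwap σ i j i = σ j :=
  Equiv.swap_apply_left _ _

lemma ssgSwap_symm_apply_self (i j : A) : (ssgSwap σ i j).symm (σ i) = j := by
  rw [Equiv.symm_apply_eq, ssgSwap_comm, ssgSwap_apply_left]

lemma ssgSwap_symm_apply_of_ne {i j : A} {u : V} (hi : u ≠ σ i) (hj : u ≠ σ j) :
    (ssgSwap σ i j).symm u = σ.symm u := by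
  simp only [ssgSwap, Equiv.symm_trans_apply, Equiv.symm_swap, Equiv.swap_apply_of_ne_of_ne hi hj]

end Swap

noncomputable def nbrsOfColor {V A : Type*} [Fintype V] (G : SimpleGraph V) [DecidableRel G.Adj]
    {k : ℕ} (c : A → Fin k) (σ : A ≃ V) (v : V) (x : Fin k) : Finset V :=
  (G.neighborFinset v).filter fun u => c (σ.symm u) = x

section Utility

variable {V A : Type*} [Fintype V] [DecidableEq V] {G : SimpleGraph V} [DecidableRel G.Adj]
  {k : ℕ} {c : A → Fin k} {σ : A ≃ V}

lemma ssgUtil_eq (i : A) :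
    ssgUtil G c σ i = #(nbrsOfColor G c σ (σ i) (c i)) / G.degree (σ i) := rfl

lemma ssgUtil_eq_zero_iff {i : A} (hi : 0 < G.degree (σ i)) :
    ssgUtil G c σ i = 0 ↔ nbrsOfColor G c σ (σ i) (c i) = ∅ := by
  rw [ssgUtil_eq, div_eq_zero_iff, Nat.cast_eq_zero, Nat.cast_eq_zero, card_eq_zero]
  exact or_iff_left hi.ne'

lemma nbrsOfColor_ssgSwap {i j : A} (hc : c j ≠ c i) :
    nbrsOfColor G c (ssgSwap σ i j) (σ j) (c i) = (nbrsOfColor G c σ (σ j) (c i)).erase (σ i) := by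
  ext u
  simp only [nbrsOfColor, mem_erase, mem_filter, mem_neighborFinset]
  by_cases hui : u = σ i
  · subst hui
    simp [ssgSwap_symm_apply_self, hc]
  · by_cases huj : G.Adj (σ j) u
    · simp [hui, huj, ssgSwap_symm_apply_of_ne σ hui huj.ne']
    · simp [huj]

lemma ssgUtil_ssgSwap_left {i j : A} (hc : c j ≠ c i) :
    ssgUtil G c (ssgSwap σ i j) i =
      #((nbrsOfColor G c σ (σ j) (c i)).erase (σ i)) / G.degree (σ j) := by
  rw [ssgUtil_eq, ssgSwap_apply_left, nbrsOfColor_ssgSwap hc]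

lemma ssgUtil_ssgSwap_right {i j : A} (hc : c i ≠ c j) :
    ssgUtil G c (ssgSwap σ i j) j =
      #((nbrsOfColor G c σ (σ i) (c j)).erase (σ j)) / G.degree (σ i) := by
  rw [ssgSwap_comm, ssgUtil_ssgSwap_left hc]

end Utility

section TwoColors

variable {V A : Type*} [Fintype V] {G : SimpleGraph V} [DecidableRel G.Adj]
  {c : A → Fin 2} {σ : A ≃ V}

variable (G c σ) in
lemma card_nbrsOfColor_add_card_nbrsOfColor {x y : Fin 2} (hxy : x ≠ y) (v : V) :
    #(nbrsOfColor G c σ v x) + #(nbrsOfColor G c σ v y) = G.degree v := by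
  rw [← card_neighborFinset_eq_degree, nbrsOfColor, nbrsOfColor,
    ← card_filter_add_card_filter_not (s := G.neighborFinset v) (fun u => c (σ.symm u) = x)]
  congr 2
  exact filter_congr fun u _ => by omega

lemma nbrsOfColor_eq_neighborFinset {x y : Fin 2} (hxy : x ≠ y) {v : V}
    (hv : nbrsOfColor G c σ v x = ∅) : nbrsOfColor G c σ v y = G.neighborFinset v := by
  have := card_nbrsOfColor_add_card_nbrsOfColor G c σ hxy v
  rw [hv, card_empty, zero_add, ← card_neighborFinset_eq_degree] at this
  exact eq_of_subset_of_card_le (filter_subset _ _) this.ge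

variable [DecidableEq V]

lemma ssgUtil_ssgSwap_right_of_isolated {i j : A} (hc : c i ≠ c j)
    (hiso : nbrsOfColor G c σ (σ i) (c i) = ∅) :
    ssgUtil G c (ssgSwap σ i j) j = #((G.neighborFinset (σ i)).erase (σ j)) / G.degree (σ i) := by
  rw [ssgUtil_ssgSwap_right hc, nbrsOfColor_eq_neighborFinset hc hiso]

lemma nbrsOfColor_eq_empty_of_not_adj (heq : ssgEquilibrium G c σ) {i j : A}
    (hi : 0 < G.degree (σ i)) (hiso : nbrsOfColor G c σ (σ i) (c i) = ∅) (hc : c j ≠ c i)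
    (hij : ¬ G.Adj (σ i) (σ j)) : nbrsOfColor G c σ (σ j) (c i) = ∅ := by
  by_contra hne
  have ht : 0 < #(nbrsOfColor G c σ (σ j) (c i)) := card_pos.2 (nonempty_iff_ne_empty.2 hne)
  have hsum := card_nbrsOfColor_add_card_nbrsOfColor G c σ hc (σ j)
  have hj : (0 : ℚ) < G.degree (σ j) := Nat.cast_pos.2 (by omega)
  have hi' : (G.degree (σ i) : ℚ) ≠ 0 := by exact_mod_cast hi.ne'
  have hσi : σ i ∉ nbrsOfColor G c σ (σ j) (c i) :=
    fun h => hij ((mem_neighborFinset _ _ _).1 (mem_filter.1 h).1).symm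
  have hσj : σ j ∉ G.neighborFinset (σ i) := fun h => hij ((mem_neighborFinset _ _ _).1 h)
  refine heq i j ⟨hc.symm, ?_, ?_⟩
  · rw [(ssgUtil_eq_zero_iff hi).2 hiso, ssgUtil_ssgSwap_left hc, erase_eq_of_notMem hσi]
    exact div_pos (Nat.cast_pos.2 ht) hj
  · rw [ssgUtil_ssgSwap_right_of_isolated hc.symm hiso, erase_eq_of_notMem hσj,
      card_neighborFinset_eq_degree, div_self hi', ssgUtil_eq, div_lt_one hj]
    exact_mod_cast (show #(nbrsOfColor G c σ (σ j) (c j)) < G.degree (σ j) by omega)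

lemma card_nbrsOfColor_le_one_of_adj (heq : ssgEquilibrium G c σ) {i j : A}
    (hdeg : G.degree (σ j) < 2 * G.degree (σ i)) (hiso : nbrsOfColor G c σ (σ i) (c i) = ∅)
    (hc : c j ≠ c i) (hij : G.Adj (σ i) (σ j)) : #(nbrsOfColor G c σ (σ j) (c i)) ≤ 1 := by
  by_contra! ht
  have hσi : σ i ∈ nbrsOfColor G c σ (σ j) (c i) :=
    mem_filter.2 ⟨(mem_neighborFinset _ _ _).2 hij.symm, by simp⟩
  have hσj : σ j ∈ G.neighborFinset (σ i) := (mem_neighborFinset _ _ _).2 hij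
  have hsum := card_nbrsOfColor_add_card_nbrsOfColor G c σ hc (σ j)
  have herase := card_erase_add_one hσj
  have herase' := card_erase_add_one hσi
  have hi : 0 < G.degree (σ i) := (G.degree_pos_iff_exists_adj _).2 ⟨_, hij⟩
  have hj : 0 < G.degree (σ j) := by omega
  rw [card_neighborFinset_eq_degree] at herase
  refine heq i j ⟨hc.symm, ?_, ?_⟩
  · rw [(ssgUtil_eq_zero_iff hi).2 hiso, ssgUtil_ssgSwap_left hc]
    exact div_pos (Nat.cast_pos.2 (by omega)) (Nat.cast_pos.2 hj)
  · rw [ssgUtil_ssgSwap_right_of_isolated hc.symm hiso, ssgUtil_eq,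
      div_lt_div_iff₀ (Nat.cast_pos.2 hj) (Nat.cast_pos.2 hi)]
    exact_mod_cast (show #(nbrsOfColor G c σ (σ j) (c j)) * G.degree (σ i) <
      #((G.neighborFinset (σ i)).erase (σ j)) * G.degree (σ j) by nlinarith)

lemma sameColor_of_adj_of_isolated (heq : ssgEquilibrium G c σ)
    (hdeg : ∀ v w, G.Adj v w → G.degree w < 2 * G.degree v) {i : A}
    (hi : 0 < G.degree (σ i)) (hiso : nbrsOfColor G c σ (σ i) (c i) = ∅) {u w : V}
    (hu : c (σ.symm u) = c i) (hui : u ≠ σ i) (huw : G.Adj u w) :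
    c (σ.symm w) = c i ∧ w ≠ σ i := by
  have hwi : w ≠ σ i := by
    rintro rfl
    exact notMem_empty u (hiso ▸ mem_filter.2 ⟨(mem_neighborFinset _ _ _).2 huw.symm, hu⟩)
  refine ⟨?_, hwi⟩
  by_contra hw
  obtain ⟨j, rfl⟩ := σ.surjective w
  rw [Equiv.symm_apply_apply] at hw
  have hu_mem : u ∈ nbrsOfColor G c σ (σ j) (c i) :=
    mem_filter.2 ⟨(mem_neighborFinset _ _ _).2 huw.symm, hu⟩
  by_cases hij : G.Adj (σ i) (σ j)
  · have hσi : σ i ∈ nbrsOfColor G c σ (σ j) (c i) :=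
      mem_filter.2 ⟨(mem_neighborFinset _ _ _).2 hij.symm, by simp⟩
    exact hui (card_le_one.1 (card_nbrsOfColor_le_one_of_adj heq (hdeg _ _ hij) hiso hw hij)
      _ hu_mem _ hσi)
  · exact notMem_empty u (nbrsOfColor_eq_empty_of_not_adj heq hi hiso hw hij ▸ hu_mem)

theorem ssgUtil_pos_of_ssgEquilibrium (hG : G.Preconnected)
    (hdeg : ∀ v w, G.Adj v w → G.degree w < 2 * G.degree v) (heq : ssgEquilibrium G c σ)
    {i i' j : A} (hi' : i' ≠ i) (hci' : c i' = c i) (hcj : c j ≠ c i) :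
    0 < ssgUtil G c σ i := by
  have hi : 0 < G.degree (σ i) := (hG _ _).degree_pos_left (σ.injective.ne hi'.symm)
  refine lt_of_le_of_ne (by rw [ssgUtil_eq]; positivity) fun h0 => hcj ?_
  have hiso := (ssgUtil_eq_zero_iff hi).1 h0.symm
  have hclosed := hG.forall_of_adj_closed (p := fun u => c (σ.symm u) = c i ∧ u ≠ σ i)
    (fun _ _ huw hu => sameColor_of_adj_of_isolated heq hdeg hi hiso hu.1 hu.2 huw)
    ⟨by simpa using hci', σ.injective.ne hi'⟩ (σ j)
  simpa using hclosed.1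

end TwoColors

lemma grid4_eq_boxProd (l h : ℕ) : grid4 l h = pathGraph l □ pathGraph h := by
  ext p q
  simp only [grid4, boxProd_adj, pathGraph_adj, Nat.dist, Fin.ext_iff]
  omega

lemma grid4_degree (l h : ℕ) (p : Fin l × Fin h) :
    (grid4 l h).degree p = (pathGraph l).degree p.1 + (pathGraph h).degree p.2 := by
  rw [← degree_boxProd]
  simp_rw [← card_neighborSet_eq_degree, grid4_eq_boxProd]

lemma grid4_degree_lt_two_mul {l h : ℕ} (hl : 2 ≤ l) (hh : 2 ≤ h) {p q : Fin l × Fin h}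
    (hpq : (grid4 l h).Adj p q) : (grid4 l h).degree q < 2 * (grid4 l h).degree p := by
  have bounds {n : ℕ} (hn : 2 ≤ n) (v : Fin n) :=
    And.intro (pathGraph_degree_pos hn v) (pathGraph_degree_le_two v)
  have := bounds hl p.1; have := bounds hl q.1; have := bounds hh p.2; have := bounds hh q.2
  rw [grid4_eq_boxProd, boxProd_adj] at hpq
  rw [grid4_degree, grid4_degree]
  rcases hpq with ⟨-, h2⟩ | ⟨-, h1⟩
  · rw [h2]; omega
  · rw [h1]; omega

lemma grid4_preconnected (l h : ℕ) : (grid4 l h).Preconnected :=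
  grid4_eq_boxProd l h ▸ (pathGraph_preconnected l).boxProd (pathGraph_preconnected h)

theorem stmt18 (l h : ℕ) (hl : 2 ≤ l) (hh : 2 ≤ h)
    (c : Fin l × Fin h → Fin 2)
    (ho : 2 ≤ (Finset.univ.filter (fun i : Fin l × Fin h => c i = 0)).card)
    (hb : 2 ≤ (Finset.univ.filter (fun i : Fin l × Fin h => c i = 1)).card)
    (σ : (Fin l × Fin h) ≃ (Fin l × Fin h))
    (heq : ssgEquilibrium (grid4 l h) c σ) :
    ∀ i : Fin l × Fin h, 0 < ssgUtil (grid4 l h) c σ i := by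
  intro i
  have hcolor (x : Fin 2) : ∃ p ≠ i, c p = x := by
    obtain ⟨p, hp, hpi⟩ := exists_mem_ne
      (Fin.forall_fin_two (p := fun x => 2 ≤ #{q | c q = x}) |>.2 ⟨ho, hb⟩ x) i
    exact ⟨p, hpi, (mem_filter.1 hp).2⟩
  obtain ⟨i', hi', hci'⟩ := hcolor (c i)
  obtain ⟨j, -, hcj⟩ := hcolor (c i + 1)
  exact ssgUtil_pos_of_ssgEquilibrium (grid4_preconnected l h)
    (fun _ _ => grid4_degree_lt_two_mul hl hh) heq hi' hci' (by omega : c j ≠ c i)
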